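/- Let c > 0. Points x1 = 0 and x2 = c on the real line with labels y1 = (3/5, 2/5, 0) and y2 = (0, 2/5, 3/5) induce, via the classifier x ↦ argmax_i [y1(i)/x + y2(i)/(c − x)] on (0, c), exactly three classes: class 1 on (0, c/3), class 2 on (c/3, 2c/3), and class 3 on (2c/3, c). In particular the decision boundaries scale linearly with c. -/
import Mathlib


/-- Weighted label at point `x` from prototypes at `0` and `c` with labels
`y1 = (3/5, 2/5, 0)` and `y2 = (0, 2/5, 3/5)`. -/
noncomputable def Ystar7 (c x : ℝ) (i : Fin 3) : ℝ :=
  (![(3:ℝ)/5, 2/5, 0]) i / x + (![(0:ℝ), 2/5, 3/5]) i / (c - x)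

theorem stmt_7 (c : ℝ) (hc : 0 < c) (x : ℝ) (hx0 : 0 < x) (hxc : x < c) :
    (x < c / 3 → ∀ j : Fin 3, j ≠ 0 → Ystar7 c x j < Ystar7 c x 0) ∧
    (c / 3 < x → x < 2 * c / 3 → ∀ j : Fin 3, j ≠ 1 → Ystar7 c x j < Ystar7 c x 1) ∧
    (2 * c / 3 < x → ∀ j : Fin 3, j ≠ 2 → Ystar7 c x j < Ystar7 c x 2) := by
  have hcx : (0:ℝ) < c - x := by linarith
  have hx0' : x ≠ 0 := ne_of_gt hx0
  have hcx' : c - x ≠ 0 := ne_of_gt hcx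
  have d01 : Ystar7 c x 0 - Ystar7 c x 1 = (c - 3*x) / (5*x*(c-x)) := by
    simp only [Ystar7, Matrix.cons_val_zero, Matrix.cons_val_one, Matrix.head_cons]
    field_simp
    ring
  have d02 : Ystar7 c x 0 - Ystar7 c x 2 = (3*(c - 2*x)) / (5*x*(c-x)) := by
    simp only [Ystar7, Matrix.cons_val_zero, Matrix.cons_val_one, Matrix.head_cons,
      Matrix.cons_val_two, Matrix.tail_cons]
    field_simp
    ring
  have d12 : Ystar7 c x 1 - Ystar7 c x 2 = (2*c - 3*x) / (5*x*(c-x)) := by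
    simp only [Ystar7, Matrix.cons_val_zero, Matrix.cons_val_one, Matrix.head_cons,
      Matrix.cons_val_two, Matrix.tail_cons]
    field_simp
    ring
  refine ⟨?_, ?_, ?_⟩
  · intro h j hj
    fin_cases j
    · exact absurd rfl hj
    · show Ystar7 c x 1 < Ystar7 c x 0
      have : (0:ℝ) < (c - 3*x) / (5*x*(c-x)) := div_pos (by linarith) (by positivity)
      linarith [d01]
    · show Ystar7 c x 2 < Ystar7 c x 0
      have : (0:ℝ) < (3*(c - 2*x)) / (5*x*(c-x)) := div_pos (by linarith) (by positivity)
      linarith [d02]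
  · intro h1 h2 j hj
    fin_cases j
    · show Ystar7 c x 0 < Ystar7 c x 1
      have : (c - 3*x) / (5*x*(c-x)) < 0 :=
        div_neg_of_neg_of_pos (by linarith) (by positivity)
      linarith [d01]
    · exact absurd rfl hj
    · show Ystar7 c x 2 < Ystar7 c x 1
      have : (0:ℝ) < (2*c - 3*x) / (5*x*(c-x)) := div_pos (by linarith) (by positivity)
      linarith [d12]
  · intro h j hj
    fin_cases j
    · show Ystar7 c x 0 < Ystar7 c x 2
      have : (3*(c - 2*x)) / (5*x*(c-x)) < 0 :=
        div_neg_of_neg_of_pos (by linarith) (by positivity)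
      linarith [d02]
    · show Ystar7 c x 1 < Ystar7 c x 2
      have : (2*c - 3*x) / (5*x*(c-x)) < 0 :=
        div_neg_of_neg_of_pos (by linarith) (by positivity)
      linarith [d12]
    · exact absurd rfl hj
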